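/- arXiv:1807.03965 — 3 statements merged into one kernel-verified Lean document; each statement's English description precedes it below -/
import Mathlib

section
/- Suppose the automaton ℳ is alive. Then the constrained joint spectral radius of the constrained switching system equals the joint spectral radius of the lifted family: ρ(𝒜,ℳ) = ρ(𝒜_ℳ). -/
/-!
The lifted products factor as `Φ_σ = F_σ ⊗ A_σ`, and `F_σ` is again a matrix with `{0,1}` entries
and at most one nonzero entry per column. So `Φ_σ = 0` when `σ` is rejected, and otherwise
`F_σ` has an entry `1`, whence the entrywise sup norms of `Φ_σ` and `A_σ` coincide. By
equivalence of norms in finite dimension the `k`-th terms of the two sequences whose `k`-th roots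
define `ρ(𝒜,ℳ)` and `ρ(𝒜_ℳ)` agree up to a constant factor `C`, and `C ^ (1/k) → 1`.
-/

open Matrix Filter Kronecker

noncomputable section

/-- The product `A_{σ_{k-1}} ⋯ A_{σ_0}` for a word `σ = σ_0 … σ_{k-1}`. -/
def wordProd {m : ℕ} {N : Type*} [Fintype N] [DecidableEq N]
    (A : Fin m → Matrix N N ℝ) {k : ℕ} (σ : Fin k → Fin m) : Matrix N N ℝ :=
  ((List.ofFn fun i => A (σ i)).reverse).prod

/-- The spectral radius: maximal modulus of a complex eigenvalue. -/
def specRad {N : Type*} [Fintype N] [DecidableEq N] (A : Matrix N N ℝ) : ℝ :=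
  ⨆ μ ∈ ((A.map (Complex.ofReal ·)).charpoly.roots).toFinset, ‖μ‖

/-- `ν` is a sub-multiplicative matrix norm. -/
def IsSubmultNorm {N : Type*} [Fintype N] [DecidableEq N]
    (ν : Matrix N N ℝ → ℝ) : Prop :=
  (∀ S, 0 ≤ ν S) ∧ (∀ S, ν S = 0 ↔ S = 0) ∧
  (∀ (c : ℝ) (S), ν (c • S) = |c| * ν S) ∧
  (∀ S T, ν (S + T) ≤ ν S + ν T) ∧
  (∀ S T, ν (S * T) ≤ ν S * ν T)

/-- Joint spectral radius. -/
def JSR {m : ℕ} {N : Type*} [Fintype N] [DecidableEq N]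
    (ν : Matrix N N ℝ → ℝ) (A : Fin m → Matrix N N ℝ) : ℝ :=
  Filter.limsup
    (fun k : ℕ => (⨆ σ : Fin k → Fin m, ν (wordProd A σ)) ^ ((k : ℝ)⁻¹)) Filter.atTop

/-- Generalized spectral radius. -/
def GSR {m : ℕ} {N : Type*} [Fintype N] [DecidableEq N]
    (A : Fin m → Matrix N N ℝ) : ℝ :=
  Filter.limsup
    (fun k : ℕ => (⨆ σ : Fin k → Fin m, specRad (wordProd A σ)) ^ ((k : ℝ)⁻¹)) Filter.atTop

/-- Constrained joint spectral radius. -/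
def CJSR {n m ℓ : ℕ} (ν : Matrix (Fin n) (Fin n) ℝ → ℝ)
    (A : Fin m → Matrix (Fin n) (Fin n) ℝ)
    (F : Fin m → Matrix (Fin ℓ) (Fin ℓ) ℝ) : ℝ :=
  Filter.limsup
    (fun k : ℕ =>
      (⨆ σ : {σ : Fin k → Fin m // wordProd F σ ≠ 0}, ν (wordProd A σ.1)) ^ ((k : ℝ)⁻¹))
    Filter.atTop

/-- Constrained generalized spectral radius. -/
def CGSR {n m ℓ : ℕ}
    (A : Fin m → Matrix (Fin n) (Fin n) ℝ)
    (F : Fin m → Matrix (Fin ℓ) (Fin ℓ) ℝ) : ℝ :=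
  Filter.limsup
    (fun k : ℕ =>
      (⨆ σ : {σ : Fin k → Fin m // wordProd F σ ≠ 0}, specRad (wordProd A σ.1)) ^ ((k : ℝ)⁻¹))
    Filter.atTop

/-- The block norm `⦀S⦀ = max_j Σ_i ‖S_{ij}‖`. -/
def blockNorm {n ℓ : ℕ} (ν : Matrix (Fin n) (Fin n) ℝ → ℝ)
    (S : Matrix (Fin ℓ × Fin n) (Fin ℓ × Fin n) ℝ) : ℝ :=
  ⨆ j : Fin ℓ, ∑ i : Fin ℓ, ν (Matrix.of fun a b => S (i, a) (j, b))

open Topology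

section WordProd

variable {m : ℕ} {N : Type*} [Fintype N] [DecidableEq N]

@[simp]
lemma wordProd_zero (A : Fin m → Matrix N N ℝ) (σ : Fin 0 → Fin m) : wordProd A σ = 1 := by
  simp [wordProd]

lemma wordProd_snoc (A : Fin m → Matrix N N ℝ) {k : ℕ} (σ : Fin k → Fin m) (i : Fin m) :
    wordProd A (Fin.snoc σ i) = A i * wordProd A σ := by
  rw [wordProd, wordProd, List.ofFn_succ']
  simp

lemma wordProd_mem (S : Submonoid (Matrix N N ℝ)) {A : Fin m → Matrix N N ℝ} (hA : ∀ i, A i ∈ S)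
    {k : ℕ} (σ : Fin k → Fin m) : wordProd A σ ∈ S :=
  S.list_prod_mem (by simp [hA])

lemma wordProd_kronecker {L : Type*} [Fintype L] [DecidableEq L] (F : Fin m → Matrix L L ℝ)
    (A : Fin m → Matrix N N ℝ) {k : ℕ} (σ : Fin k → Fin m) :
    wordProd (fun i => F i ⊗ₖ A i) σ = wordProd F σ ⊗ₖ wordProd A σ := by
  induction k with
  | zero => simp
  | succ k ih =>
    rw [← Fin.snoc_init_self σ, wordProd_snoc, wordProd_snoc, wordProd_snoc, ih, mul_kronecker_mul]

lemma wordProd_le_mul_pow {ν : Matrix N N ℝ → ℝ} (h0 : ∀ S, 0 ≤ ν S)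
    (hmul : ∀ S T, ν (S * T) ≤ ν S * ν T) {A : Fin m → Matrix N N ℝ} {M : ℝ}
    (hA : ∀ i, ν (A i) ≤ M) {k : ℕ} (σ : Fin k → Fin m) :
    ν (wordProd A σ) ≤ ν 1 * M ^ k := by
  induction k with
  | zero => simp
  | succ k ih =>
    rw [← Fin.snoc_init_self σ, wordProd_snoc]
    have hM : 0 ≤ M := (h0 _).trans (hA (σ (Fin.last k)))
    calc ν (A (σ (Fin.last k)) * wordProd A (Fin.init σ))
        ≤ ν (A (σ (Fin.last k))) * ν (wordProd A (Fin.init σ)) := hmul _ _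
      _ ≤ M * (ν 1 * M ^ k) := mul_le_mul (hA _) (ih _) (h0 _) hM
      _ = ν 1 * M ^ (k + 1) := by ring

end WordProd

lemma Matrix.mul_apply_eq_of_col_zero_off {ι α : Type*} [Fintype ι] [NonUnitalNonAssocSemiring α]
    {G H : Matrix ι ι α} {t u : ι} (hH : ∀ v, H v t ≠ 0 → v = u) (s : ι) :
    (G * H) s t = G s u * H u t := by
  rw [mul_apply]
  refine Finset.sum_eq_single u (fun v _ hv => ?_) (by simp)
  rw [not_ne_iff.mp (mt (hH v) hv), mul_zero]

def partialMapMatrices (ι : Type*) [Fintype ι] [DecidableEq ι] : Submonoid (Matrix ι ι ℝ) where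
  carrier := {G | (∀ s t, G s t = 0 ∨ G s t = 1) ∧ ∀ t s s', G s t ≠ 0 → G s' t ≠ 0 → s = s'}
  one_mem' := by
    refine ⟨fun s t => ?_, fun t s s' hs hs' => ?_⟩
    · by_cases h : s = t <;> simp [one_apply, h]
    · simp only [one_apply, ne_eq, ite_eq_right_iff, not_forall] at hs hs'
      rw [hs.1, hs'.1]
  mul_mem' := by
    rintro G H ⟨hG01, hGcol⟩ ⟨hH01, hHcol⟩
    have hcol : ∀ t, ∃ u, ∀ v, H v t ≠ 0 → v = u := fun t => by
      by_cases h : ∃ u, H u t ≠ 0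
      · obtain ⟨u, hu⟩ := h
        exact ⟨u, fun v hv => hHcol t v u hv hu⟩
      · exact ⟨t, fun v hv => (h ⟨v, hv⟩).elim⟩
    refine ⟨fun s t => ?_, fun t s s' hs hs' => ?_⟩
    · obtain ⟨u, hu⟩ := hcol t
      rw [mul_apply_eq_of_col_zero_off hu]
      rcases hG01 s u with h | h <;> rcases hH01 u t with h' | h' <;> simp [h, h']
    · obtain ⟨u, hu⟩ := hcol t
      rw [mul_apply_eq_of_col_zero_off hu] at hs hs'
      exact hGcol u s s' (left_ne_zero_of_mul hs) (left_ne_zero_of_mul hs')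

lemma exists_apply_eq_one_of_mem_partialMapMatrices {ι : Type*} [Fintype ι] [DecidableEq ι]
    {G : Matrix ι ι ℝ} (hG : G ∈ partialMapMatrices ι) (hG0 : G ≠ 0) : ∃ s t, G s t = 1 := by
  by_contra! h
  exact hG0 (Matrix.ext fun s t => (hG.1 s t).resolve_right (h s t))

section NormFun

variable {E : Type*}

structure IsNormFun [AddCommGroup E] [Module ℝ E] (ν : E → ℝ) : Prop where
  nonneg : ∀ x, 0 ≤ ν x
  eq_zero_iff : ∀ x, ν x = 0 ↔ x = 0
  smul : ∀ (c : ℝ) x, ν (c • x) = |c| * ν x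
  add_le : ∀ x y, ν (x + y) ≤ ν x + ν y

lemma IsSubmultNorm.isNormFun {N : Type*} [Fintype N] [DecidableEq N] {ν : Matrix N N ℝ → ℝ}
    (h : IsSubmultNorm ν) : IsNormFun ν :=
  ⟨h.1, h.2.1, h.2.2.1, h.2.2.2.1⟩

def NormedBy (_ν : E → ℝ) : Type _ := E

namespace NormedBy

variable [AddCommGroup E] [Module ℝ E] (ν : E → ℝ)

instance : AddCommGroup (NormedBy ν) := inferInstanceAs (AddCommGroup E)
instance : Module ℝ (NormedBy ν) := inferInstanceAs (Module ℝ E)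
instance : Norm (NormedBy ν) := ⟨ν⟩

def equiv : E ≃ₗ[ℝ] NormedBy ν := LinearEquiv.refl ℝ E

end NormedBy

lemma IsNormFun.exists_equiv [NormedAddCommGroup E] [NormedSpace ℝ E] [FiniteDimensional ℝ E]
    {ν : E → ℝ} (h : IsNormFun ν) :
    ∃ C, 0 < C ∧ (∀ x, ν x ≤ C * ‖x‖) ∧ ∀ x, ‖x‖ ≤ C * ν x := by
  -- On `NormedBy ν` the function `ν` is a genuine norm, and the identity `E → NormedBy ν` is a
  -- continuous linear equivalence because `E` is finite-dimensional.
  let core : NormedSpace.Core ℝ (NormedBy ν) := ⟨⟨h.nonneg, h.smul, h.add_le⟩, h.eq_zero_iff⟩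
  let _ := NormedAddCommGroup.ofCore core
  let _ := NormedSpace.ofCore core
  have : FiniteDimensional ℝ (NormedBy ν) := inferInstanceAs (FiniteDimensional ℝ E)
  let e := (NormedBy.equiv ν).toContinuousLinearEquiv
  have he := norm_nonneg (e : E →L[ℝ] NormedBy ν)
  have he' := norm_nonneg (e.symm : NormedBy ν →L[ℝ] E)
  refine ⟨‖(e : E →L[ℝ] NormedBy ν)‖ + ‖(e.symm : NormedBy ν →L[ℝ] E)‖ + 1, by positivity,
    fun x => ?_, fun x => ?_⟩
  · exact (e.toContinuousLinearMap.le_opNorm x).trans (by gcongr; linarith)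
  · calc ‖x‖ = ‖e.symm (e x)‖ := by rw [e.symm_apply_apply]
      _ ≤ ‖(e.symm : NormedBy ν →L[ℝ] E)‖ * ν x := e.symm.toContinuousLinearMap.le_opNorm _
      _ ≤ _ := by gcongr; exacts [h.nonneg x, by linarith]

end NormFun

section EntrywiseSupNorm

attribute [local instance] Matrix.seminormedAddCommGroup Matrix.normedAddCommGroup
  Matrix.normedSpace

variable {α ι ι' κ κ' : Type*} [SeminormedRing α] [Fintype ι] [Fintype ι'] [Fintype κ] [Fintype κ']

lemma Matrix.norm_kronecker_le (G : Matrix ι ι' α) (X : Matrix κ κ' α) :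
    ‖G ⊗ₖ X‖ ≤ ‖G‖ * ‖X‖ := by
  refine (norm_le_iff (by positivity)).mpr fun ⟨s, a⟩ ⟨t, b⟩ => ?_
  exact (norm_mul_le _ _).trans
    (mul_le_mul G.norm_entry_le_entrywise_sup_norm X.norm_entry_le_entrywise_sup_norm
      (norm_nonneg _) (norm_nonneg _))

lemma Matrix.norm_le_norm_kronecker {G : Matrix ι ι' α} {s : ι} {t : ι'} (h : G s t = 1)
    (X : Matrix κ κ' α) : ‖X‖ ≤ ‖G ⊗ₖ X‖ := by
  refine (norm_le_iff (norm_nonneg _)).mpr fun a b => ?_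
  simpa [h] using (G ⊗ₖ X).norm_entry_le_entrywise_sup_norm (i := (s, a)) (j := (t, b))

lemma norm_le_one_of_mem_partialMapMatrices [DecidableEq ι] {G : Matrix ι ι ℝ}
    (hG : G ∈ partialMapMatrices ι) : ‖G‖ ≤ 1 :=
  (norm_le_iff zero_le_one).mpr fun s t => by rcases hG.1 s t with h | h <;> simp [h]

variable {L N : Type*} [Fintype L] [DecidableEq L] [Fintype N]
  {ν : Matrix N N ℝ → ℝ} {ν' : Matrix (L × N) (L × N) ℝ → ℝ}

lemma exists_kronecker_le_mul (hν : IsNormFun ν) (hν' : IsNormFun ν') :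
    ∃ C, 0 < C ∧ ∀ G ∈ partialMapMatrices L, ∀ X, ν' (G ⊗ₖ X) ≤ C * ν X := by
  obtain ⟨c, hc, -, hνge⟩ := hν.exists_equiv
  obtain ⟨c', hc', hν'le, -⟩ := hν'.exists_equiv
  refine ⟨c' * c, by positivity, fun G hG X => ?_⟩
  calc ν' (G ⊗ₖ X) ≤ c' * ‖G ⊗ₖ X‖ := hν'le _
    _ ≤ c' * (1 * ‖X‖) := by
      gcongr
      exact (norm_kronecker_le G X).trans
        (mul_le_mul_of_nonneg_right (norm_le_one_of_mem_partialMapMatrices hG) (norm_nonneg _))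
    _ ≤ c' * c * ν X := by rw [one_mul, mul_assoc]; gcongr; exact hνge X

lemma exists_le_mul_kronecker (hν : IsNormFun ν) (hν' : IsNormFun ν') :
    ∃ C, 0 < C ∧ ∀ G ∈ partialMapMatrices L, G ≠ 0 → ∀ X, ν X ≤ C * ν' (G ⊗ₖ X) := by
  obtain ⟨c, hc, hνle, -⟩ := hν.exists_equiv
  obtain ⟨c', hc', -, hν'ge⟩ := hν'.exists_equiv
  refine ⟨c * c', by positivity, fun G hG hG0 X => ?_⟩
  obtain ⟨s, t, hst⟩ := exists_apply_eq_one_of_mem_partialMapMatrices hG hG0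
  calc ν X ≤ c * ‖X‖ := hνle X
    _ ≤ c * ‖G ⊗ₖ X‖ := by gcongr; exact norm_le_norm_kronecker hst X
    _ ≤ c * c' * ν' (G ⊗ₖ X) := by rw [mul_assoc]; gcongr; exact hν'ge _

end EntrywiseSupNorm

section NormSup

variable {m : ℕ} {N L : Type*} [Fintype N] [DecidableEq N] [Fintype L] [DecidableEq L]

def normSup (ν : Matrix N N ℝ → ℝ) (A : Fin m → Matrix N N ℝ) (k : ℕ) : ℝ :=
  ⨆ σ : Fin k → Fin m, ν (wordProd A σ)

def constrainedNormSup (ν : Matrix N N ℝ → ℝ) (A : Fin m → Matrix N N ℝ)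
    (F : Fin m → Matrix L L ℝ) (k : ℕ) : ℝ :=
  ⨆ σ : {σ : Fin k → Fin m // wordProd F σ ≠ 0}, ν (wordProd A σ.1)

variable {ν : Matrix N N ℝ → ℝ} {A : Fin m → Matrix N N ℝ} {F : Fin m → Matrix L L ℝ} {k : ℕ}

lemma normSup_nonneg (h0 : ∀ S, 0 ≤ ν S) : 0 ≤ normSup ν A k :=
  Real.iSup_nonneg fun _ => h0 _

lemma constrainedNormSup_nonneg (h0 : ∀ S, 0 ≤ ν S) : 0 ≤ constrainedNormSup ν A F k :=
  Real.iSup_nonneg fun _ => h0 _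

lemma le_normSup (σ : Fin k → Fin m) : ν (wordProd A σ) ≤ normSup ν A k :=
  le_ciSup (f := fun σ => ν (wordProd A σ)) (Set.finite_range _).bddAbove σ

lemma le_constrainedNormSup {σ : Fin k → Fin m} (hσ : wordProd F σ ≠ 0) :
    ν (wordProd A σ) ≤ constrainedNormSup ν A F k :=
  le_ciSup (f := fun σ : {σ : Fin k → Fin m // wordProd F σ ≠ 0} => ν (wordProd A σ.1))
    (Set.finite_range _).bddAbove ⟨σ, hσ⟩

lemma normSup_le_mul_pow (hν : IsSubmultNorm ν) (A : Fin m → Matrix N N ℝ) (k : ℕ) :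
    normSup ν A k ≤ ν 1 * (∑ i, ν (A i)) ^ k :=
  Real.iSup_le
    (wordProd_le_mul_pow hν.1 hν.2.2.2.2
      fun i => Finset.single_le_sum (fun j _ => hν.1 (A j)) (Finset.mem_univ i))
    (mul_nonneg (hν.1 1) (pow_nonneg (Finset.sum_nonneg fun i _ => hν.1 (A i)) k))

variable {ν' : Matrix (L × N) (L × N) ℝ → ℝ}

lemma exists_constrainedNormSup_le_mul (hν : IsNormFun ν) (hν' : IsNormFun ν')
    (hF : ∀ i, F i ∈ partialMapMatrices L) (A : Fin m → Matrix N N ℝ) :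
    ∃ C, 0 < C ∧ ∀ k, constrainedNormSup ν A F k ≤ C * normSup ν' (fun i => F i ⊗ₖ A i) k := by
  obtain ⟨C, hC, hle⟩ := exists_le_mul_kronecker hν hν'
  refine ⟨C, hC, fun k => Real.iSup_le (fun ⟨σ, hσ⟩ => ?_)
    (mul_nonneg hC.le (normSup_nonneg hν'.nonneg))⟩
  calc ν (wordProd A σ) ≤ C * ν' (wordProd F σ ⊗ₖ wordProd A σ) :=
        hle _ (wordProd_mem _ hF σ) hσ _
    _ ≤ C * normSup ν' (fun i => F i ⊗ₖ A i) k := by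
      rw [← wordProd_kronecker]; gcongr; exact le_normSup σ

lemma exists_normSup_le_mul_constrainedNormSup (hν : IsNormFun ν) (hν' : IsNormFun ν')
    (hF : ∀ i, F i ∈ partialMapMatrices L) (A : Fin m → Matrix N N ℝ) :
    ∃ C, 0 < C ∧ ∀ k, normSup ν' (fun i => F i ⊗ₖ A i) k ≤ C * constrainedNormSup ν A F k := by
  obtain ⟨C, hC, hle⟩ := exists_kronecker_le_mul hν hν'
  have hsup : ∀ k, 0 ≤ C * constrainedNormSup ν A F k :=
    fun k => mul_nonneg hC.le (constrainedNormSup_nonneg hν.nonneg)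
  refine ⟨C, hC, fun k => Real.iSup_le (fun σ => ?_) (hsup k)⟩
  rw [wordProd_kronecker]
  by_cases hσ : wordProd F σ = 0
  · rw [hσ, zero_kronecker, (hν'.eq_zero_iff 0).mpr rfl]
    exact hsup k
  · exact (hle _ (wordProd_mem _ hF σ) _).trans (by gcongr; exact le_constrainedNormSup hσ)

end NormSup

lemma tendsto_const_rpow_inv_natCast {C : ℝ} (hC : 0 < C) :
    Tendsto (fun k : ℕ => C ^ (k : ℝ)⁻¹) atTop (𝓝 1) :=
  Real.rpow_zero C ▸ (Real.continuousAt_const_rpow hC.ne').tendsto.comp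
    (tendsto_inv_atTop_zero.comp tendsto_natCast_atTop_atTop)

lemma isBoundedUnder_rpow_inv_of_le_mul_pow {b : ℕ → ℝ} {D M : ℝ} (hb : ∀ k, 0 ≤ b k)
    (hM : 0 ≤ M) (h : ∀ k, b k ≤ D * M ^ k) :
    IsBoundedUnder (· ≤ ·) atTop fun k => b k ^ (k : ℝ)⁻¹ := by
  have hD : 0 < max D 1 := lt_max_of_lt_right one_pos
  refine ((tendsto_const_rpow_inv_natCast hD).mul_const M).isBoundedUnder_le.mono_le ?_
  filter_upwards [eventually_ne_atTop 0] with k hk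
  calc b k ^ (k : ℝ)⁻¹ ≤ (max D 1 * M ^ k) ^ (k : ℝ)⁻¹ :=
        Real.rpow_le_rpow (hb k) ((h k).trans (by gcongr; exact le_max_left _ _)) (by positivity)
    _ = max D 1 ^ (k : ℝ)⁻¹ * M := by
        rw [Real.mul_rpow hD.le (by positivity), Real.pow_rpow_inv_natCast hM hk]

lemma limsup_rpow_inv_le_of_le_mul {a b : ℕ → ℝ} {C : ℝ} (ha : ∀ k, 0 ≤ a k)
    (hb : ∀ k, 0 ≤ b k) (hC : 0 < C) (hab : ∀ k, a k ≤ C * b k)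
    (hbdd : IsBoundedUnder (· ≤ ·) atTop fun k => b k ^ (k : ℝ)⁻¹) :
    limsup (fun k => a k ^ (k : ℝ)⁻¹) atTop ≤ limsup (fun k => b k ^ (k : ℝ)⁻¹) atTop := by
  set u : ℕ → ℝ := fun k => C ^ (k : ℝ)⁻¹
  have hu : Tendsto u atTop (𝓝 1) := tendsto_const_rpow_inv_natCast hC
  calc limsup (fun k => a k ^ (k : ℝ)⁻¹) atTop
      ≤ limsup (u * fun k => b k ^ (k : ℝ)⁻¹) atTop :=
        limsup_le_limsup
          (Eventually.of_forall fun k => (Real.rpow_le_rpow (ha k) (hab k) (by positivity)).trans_eq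
            (Real.mul_rpow hC.le (hb k)))
          (isCoboundedUnder_le_of_le atTop fun k => Real.rpow_nonneg (ha k) _)
          (isBoundedUnder_le_mul_of_nonneg (Frequently.of_forall fun k => by positivity)
            hu.isBoundedUnder_le (Eventually.of_forall fun k => Real.rpow_nonneg (hb k) _) hbdd)
    _ ≤ limsup u atTop * limsup (fun k => b k ^ (k : ℝ)⁻¹) atTop :=
        limsup_mul_le (Frequently.of_forall fun k => by positivity) hu.isBoundedUnder_le
          (Eventually.of_forall fun k => Real.rpow_nonneg (hb k) _) hbdd
    _ = limsup (fun k => b k ^ (k : ℝ)⁻¹) atTop := by rw [hu.limsup_eq, one_mul]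

theorem stmt1_general    {n m ℓ : ℕ}
    (A : Fin m → Matrix (Fin n) (Fin n) ℝ)
    (ν : Matrix (Fin n) (Fin n) ℝ → ℝ) (hν : IsSubmultNorm ν)
    (F : Fin m → Matrix (Fin ℓ) (Fin ℓ) ℝ)
    (hF01 : ∀ i s t, F i s t = 0 ∨ F i s t = 1)
    (hFcol : ∀ i t s s', F i s t ≠ 0 → F i s' t ≠ 0 → s = s')
    (ν' : Matrix (Fin ℓ × Fin n) (Fin ℓ × Fin n) ℝ → ℝ) (hν' : IsSubmultNorm ν') :
    CJSR ν A F = JSR ν' (fun i => F i ⊗ₖ A i) := by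
  have hF : ∀ i, F i ∈ partialMapMatrices (Fin ℓ) := fun i => ⟨hF01 i, hFcol i⟩
  obtain ⟨C₁, hC₁, hab⟩ := exists_constrainedNormSup_le_mul hν.isNormFun hν'.isNormFun hF A
  obtain ⟨C₂, hC₂, hba⟩ :=
    exists_normSup_le_mul_constrainedNormSup hν.isNormFun hν'.isNormFun hF A
  set M := ∑ i, ν' (F i ⊗ₖ A i)
  have hM : 0 ≤ M := Finset.sum_nonneg fun i _ => hν'.1 _
  have hb := normSup_le_mul_pow hν' (fun i => F i ⊗ₖ A i)
  have ha : ∀ k, constrainedNormSup ν A F k ≤ C₁ * ν' 1 * M ^ k := fun k =>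
    (hab k).trans (by rw [mul_assoc]; gcongr; exact hb k)
  exact le_antisymm
    (limsup_rpow_inv_le_of_le_mul (fun _ => constrainedNormSup_nonneg hν.1)
      (fun _ => normSup_nonneg hν'.1) hC₁ hab (isBoundedUnder_rpow_inv_of_le_mul_pow
        (fun _ => normSup_nonneg hν'.1) hM hb))
    (limsup_rpow_inv_le_of_le_mul (fun _ => normSup_nonneg hν'.1)
      (fun _ => constrainedNormSup_nonneg hν.1) hC₂ hba (isBoundedUnder_rpow_inv_of_le_mul_pow
        (fun _ => constrainedNormSup_nonneg hν.1) hM ha))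

theorem stmt1    {n m ℓ : ℕ} (hn : 0 < n) (hm : 0 < m) (hℓ : 0 < ℓ)
    (A : Fin m → Matrix (Fin n) (Fin n) ℝ)
    (ν : Matrix (Fin n) (Fin n) ℝ → ℝ) (hν : IsSubmultNorm ν)
    (F : Fin m → Matrix (Fin ℓ) (Fin ℓ) ℝ)
    (hF01 : ∀ i s t, F i s t = 0 ∨ F i s t = 1)
    (hFcol : ∀ i t s s', F i s t ≠ 0 → F i s' t ≠ 0 → s = s')
    (halive : ∀ t : Fin ℓ, ∃ i : Fin m, ∃ s : Fin ℓ, F i s t ≠ 0)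
    (ν' : Matrix (Fin ℓ × Fin n) (Fin ℓ × Fin n) ℝ → ℝ) (hν' : IsSubmultNorm ν') :
    CJSR ν A F = JSR ν' (fun i => F i ⊗ₖ A i) :=
  stmt1_general A ν hν F hF01 hFcol ν' hν'

end
end

section
/- Let F ∈ ℝ^{ℓ×ℓ} have all entries in {0,1} with at most one nonzero entry in each column. Then the spectral radius of F equals 1 if and only if there exist an integer p with 1 ≤ p ≤ ℓ and an index j ∈ [ℓ] such that the (j,j) entry of F^p is nonzero. -/
open Matrix Filter Kronecker

noncomputable section

/-! A 0-1 matrix with at most one nonzero entry per column is the matrix of a partial map `f`, and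
so are its powers: `(F ^ p) s t ≠ 0` iff `f^[p] t = s`. If `f` has no cycle, by pigeonhole every
orbit dies within `ℓ` steps, so `F ^ ℓ = 0` and the spectral radius is `0`. If `f^[p] j = j`, then
column `j` of `1 - F ^ p` vanishes, so `1` is an eigenvalue of `F ^ p` and, by spectral mapping,
some eigenvalue `μ` of `F` has `μ ^ p = 1`. No eigenvalue exceeds `1` in modulus: for a left
eigenvector `v`, every coordinate of `v ᵥ* F` is a coordinate of `v` or `0`. -/

structure IsPartialMapMatrix {n R : Type*} [Zero R] [One R] (F : Matrix n n R) : Prop where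
  zero_or_one : ∀ s t, F s t = 0 ∨ F s t = 1
  eq_of_ne_zero : ∀ t s s', F s t ≠ 0 → F s' t ≠ 0 → s = s'

namespace IsPartialMapMatrix

section Semiring

variable {n R : Type*} [Semiring R] {A B F : Matrix n n R}

theorem eq_one_of_ne_zero (hF : IsPartialMapMatrix F) {s t : n} (h : F s t ≠ 0) : F s t = 1 :=
  (hF.zero_or_one s t).resolve_left h

theorem map {S : Type*} [Semiring S] (hF : IsPartialMapMatrix F) (f : R →+* S) :
    IsPartialMapMatrix (F.map f) where
  zero_or_one s t := by
    rcases hF.zero_or_one s t with h | h <;> simp [h]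
  eq_of_ne_zero t s s' hs hs' :=
    hF.eq_of_ne_zero t s s' (fun h => hs (by simp [h])) (fun h => hs' (by simp [h]))

theorem one [DecidableEq n] : IsPartialMapMatrix (1 : Matrix n n R) where
  zero_or_one s t := by
    by_cases h : s = t <;> simp [one_apply, h]
  eq_of_ne_zero t s s' hs hs' := by
    by_contra hss'
    rcases eq_or_ne s t with rfl | hst
    · exact hs' (one_apply_ne (Ne.symm hss'))
    · exact hs (one_apply_ne hst)

variable [Fintype n]

theorem vecMul_apply_of_ne_zero (hB : IsPartialMapMatrix B) (v : n → R) {r t : n}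
    (h : B r t ≠ 0) : (v ᵥ* B) t = v r := by
  rw [vecMul, dotProduct, Finset.sum_eq_single r, hB.eq_one_of_ne_zero h, mul_one]
  · intro r' _ hr'
    rw [not_ne_iff.mp fun h' => hr' (hB.eq_of_ne_zero t r' r h' h), mul_zero]
  · simp

theorem mul_apply_of_ne_zero {m : Type*} (hB : IsPartialMapMatrix B) (A : Matrix m n R)
    {r t : n} (h : B r t ≠ 0) (s : m) : (A * B) s t = A s r :=
  hB.vecMul_apply_of_ne_zero (A s) h

theorem mul (hA : IsPartialMapMatrix A) (hB : IsPartialMapMatrix B) :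
    IsPartialMapMatrix (A * B) := by
  suffices ∀ t, (∀ s, (A * B) s t = 0) ∨ ∃ r, ∀ s, (A * B) s t = A s r by
    constructor
    · intro s t
      rcases this t with h | ⟨r, h⟩
      · exact .inl (h s)
      · rw [h]; exact hA.zero_or_one s r
    · intro t s s'
      rcases this t with h | ⟨r, h⟩
      · simp [h]
      · rw [h, h]; exact hA.eq_of_ne_zero r s s'
  intro t
  by_cases hcol : ∃ r, B r t ≠ 0
  · obtain ⟨r, hr⟩ := hcol
    exact .inr ⟨r, hB.mul_apply_of_ne_zero A hr⟩
  · push Not at hcol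
    exact .inl fun s => Finset.sum_eq_zero fun r _ => by simp [hcol r]

variable [DecidableEq n]

theorem pow (hF : IsPartialMapMatrix F) (k : ℕ) : IsPartialMapMatrix (F ^ k) := by
  induction k with
  | zero => exact one
  | succ k ih => rw [pow_succ]; exact ih.mul hF

theorem pow_add_apply_of_ne_zero (hF : IsPartialMapMatrix F) {a b : ℕ} {r t : n}
    (h : (F ^ a) r t ≠ 0) (s : n) : (F ^ (b + a)) s t = (F ^ b) s r := by
  rw [pow_add, (hF.pow a).mul_apply_of_ne_zero _ h]

theorem exists_pow_apply_self_ne_zero (hF : IsPartialMapMatrix F)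
    (h : F ^ Fintype.card n ≠ 0) :
    ∃ p, 1 ≤ p ∧ p ≤ Fintype.card n ∧ ∃ j, (F ^ p) j j ≠ 0 := by
  set N := Fintype.card n
  obtain ⟨s, t, hst⟩ : ∃ s t, (F ^ N) s t ≠ 0 := by
    by_contra! h0
    exact h (Matrix.ext h0)
  have hcol : ∀ i : Fin (N + 1), ∃ r, (F ^ (i : ℕ)) r t ≠ 0 := by
    intro i
    by_contra! h0
    apply hst
    rw [show N = (N - i) + i by omega, pow_add, mul_apply]
    exact Finset.sum_eq_zero fun r _ => by rw [h0 r, mul_zero]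
  choose g hg using hcol
  obtain ⟨a, b, hab, hgab⟩ := Fintype.exists_ne_map_eq_of_card_lt g (by simp [N])
  wlog hlt : a < b generalizing a b
  · exact this b a hab.symm hgab.symm (lt_of_le_of_ne (not_lt.mp hlt) hab.symm)
  refine ⟨b - a, by omega, by omega, g b, ?_⟩
  have hb := hg b
  rwa [show (b : ℕ) = (b - a : ℕ) + a by omega, hF.pow_add_apply_of_ne_zero (hg a), hgab] at hb

end Semiring

section Field

variable {n K : Type*} [Fintype n]

theorem one_mem_spectrum_of_ne_zero [DecidableEq n] [Field K] {F : Matrix n n K}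
    (hF : IsPartialMapMatrix F) {j : n} (hj : F j j ≠ 0) : 1 ∈ spectrum K F := by
  rw [spectrum.mem_iff, map_one, isUnit_iff_isUnit_det, isUnit_iff_ne_zero, not_not]
  refine det_eq_zero_of_column_eq_zero j fun i => ?_
  by_cases hij : i = j
  · subst hij
    rw [Matrix.sub_apply, one_apply_eq, hF.eq_one_of_ne_zero hj, sub_self]
  · have hij0 : F i j = 0 := not_ne_iff.mp fun h => hij (hF.eq_of_ne_zero j i j h hj)
    rw [Matrix.sub_apply, one_apply_ne hij, hij0, sub_zero]

theorem exists_norm_vecMul_apply_le [NormedRing K] {F : Matrix n n K}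
    (hF : IsPartialMapMatrix F) (v : n → K) (t : n) : ∃ r, ‖(v ᵥ* F) t‖ ≤ ‖v r‖ := by
  by_cases hcol : ∃ r, F r t ≠ 0
  · obtain ⟨r, hr⟩ := hcol
    exact ⟨r, by rw [hF.vecMul_apply_of_ne_zero v hr]⟩
  · push Not at hcol
    exact ⟨t, by simp [vecMul, dotProduct, hcol]⟩

theorem norm_le_one_of_mem_spectrum [DecidableEq n] [NormedField K] {F : Matrix n n K}
    (hF : IsPartialMapMatrix F) {μ : K} (hμ : μ ∈ spectrum K F) : ‖μ‖ ≤ 1 := by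
  rw [spectrum.mem_iff, isUnit_iff_isUnit_det, isUnit_iff_ne_zero, not_not,
    ← exists_vecMul_eq_zero_iff] at hμ
  obtain ⟨v, hv, hvF⟩ := hμ
  have heig : v ᵥ* F = μ • v := by
    rw [vecMul_sub, Algebra.algebraMap_eq_smul_one, vecMul_smul, vecMul_one, sub_eq_zero] at hvF
    exact hvF.symm
  obtain ⟨t, -, ht⟩ := Finset.univ.exists_max_image (fun i => ‖v i‖)
    (Finset.univ_nonempty_iff.mpr (Function.ne_iff.mp hv).nonempty)
  have hvt : 0 < ‖v t‖ := by
    obtain ⟨i, hi⟩ := Function.ne_iff.mp hv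
    exact (norm_pos_iff.mpr hi).trans_le (ht i (Finset.mem_univ i))
  obtain ⟨r, hr⟩ := hF.exists_norm_vecMul_apply_le v t
  rw [heig, Pi.smul_apply, smul_eq_mul, norm_mul] at hr
  exact le_of_mul_le_mul_right (by simpa using hr.trans (ht r (Finset.mem_univ r))) hvt

end Field

end IsPartialMapMatrix

theorem spectrum.eq_zero_of_isNilpotent {K A : Type*} [Field K] [Ring A] [Algebra K A] {a : A}
    (ha : IsNilpotent a) {μ : K} (hμ : μ ∈ spectrum K a) : μ = 0 := by
  obtain ⟨k, hk⟩ := ha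
  rcases subsingleton_or_nontrivial A with hA | hA
  · simp [spectrum.of_subsingleton] at hμ
  · have hμk := spectrum.pow_mem_pow a k hμ
    rw [hk, spectrum.zero_eq, Set.mem_singleton_iff] at hμk
    exact eq_zero_of_pow_eq_zero hμk

section SpectralRadius

variable {N : Type*} [Fintype N] [DecidableEq N] {A : Matrix N N ℝ}

theorem mem_charpoly_roots_toFinset_iff {K : Type*} [Field K] [DecidableEq K] (M : Matrix N N K)
    (μ : K) :
    μ ∈ M.charpoly.roots.toFinset ↔ μ ∈ spectrum K M := by
  rw [Multiset.mem_toFinset, Polynomial.mem_roots M.charpoly_monic.ne_zero,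
    mem_spectrum_iff_isRoot_charpoly]

theorem specRad_le {c : ℝ} (hc : 0 ≤ c)
    (h : ∀ μ ∈ spectrum ℂ (A.map (Complex.ofReal ·)), ‖μ‖ ≤ c) : specRad A ≤ c :=
  Real.iSup_le (fun μ => Real.iSup_le
    (fun hμ => h μ ((mem_charpoly_roots_toFinset_iff _ _).mp hμ)) hc) hc

theorem norm_le_specRad {μ : ℂ} (hμ : μ ∈ spectrum ℂ (A.map (Complex.ofReal ·))) :
    ‖μ‖ ≤ specRad A := by
  have hμ' := (mem_charpoly_roots_toFinset_iff _ μ).mpr hμ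
  set S := (A.map (Complex.ofReal ·)).charpoly.roots.toFinset
  have hbdd : BddAbove (Set.range fun ν => ⨆ _ : ν ∈ S, ‖ν‖) := by
    refine ⟨∑ ν ∈ S, ‖ν‖, ?_⟩
    rintro _ ⟨ν, rfl⟩
    exact Real.iSup_le
      (fun hν => Finset.single_le_sum (f := (‖·‖)) (fun _ _ => norm_nonneg _) hν)
      (Finset.sum_nonneg fun _ _ => norm_nonneg _)
  calc ‖μ‖ = ⨆ _ : μ ∈ S, ‖μ‖ := (ciSup_pos (f := fun _ => ‖μ‖) hμ').symm
    _ ≤ specRad A := le_ciSup hbdd μ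

theorem specRad_eq_zero_of_isNilpotent (hA : IsNilpotent A) : specRad A = 0 := by
  refine le_antisymm (specRad_le le_rfl fun μ hμ => ?_) ?_
  · rw [spectrum.eq_zero_of_isNilpotent (hA.map (RingHom.mapMatrix Complex.ofRealHom)) hμ,
      norm_zero]
  · exact Real.iSup_nonneg fun μ => Real.iSup_nonneg fun _ => norm_nonneg μ

end SpectralRadius

theorem stmt10_general
    {ℓ : ℕ}
    (F : Matrix (Fin ℓ) (Fin ℓ) ℝ)
    (hF01 : ∀ s t, F s t = 0 ∨ F s t = 1)
    (hFcol : ∀ t s s', F s t ≠ 0 → F s' t ≠ 0 → s = s') :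
    specRad F = 1 ↔ ∃ p : ℕ, 1 ≤ p ∧ p ≤ ℓ ∧ ∃ j : Fin ℓ, (F ^ p) j j ≠ 0 := by
  have hF : IsPartialMapMatrix F := ⟨hF01, hFcol⟩
  have hM : IsPartialMapMatrix (F.map Complex.ofRealHom) := hF.map Complex.ofRealHom
  constructor
  · intro hspec
    by_contra! hcycle
    have hnil : F ^ ℓ = 0 := by
      by_contra hne
      obtain ⟨p, hp, hpℓ, j, hj⟩ := hF.exists_pow_apply_self_ne_zero (by simpa using hne)
      exact hj (hcycle p hp (by simpa using hpℓ) j)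
    simp [specRad_eq_zero_of_isNilpotent ⟨ℓ, hnil⟩] at hspec
  · rintro ⟨p, hp, -, j, hj⟩
    have h1 : (1 : ℂ) ∈ spectrum ℂ (F.map Complex.ofRealHom ^ p) :=
      (hM.pow p).one_mem_spectrum_of_ne_zero (j := j) (by simpa [← Matrix.map_pow] using hj)
    rw [spectrum.map_pow_of_pos _ hp] at h1
    obtain ⟨μ, hμ, hμp⟩ := h1
    refine le_antisymm (specRad_le zero_le_one fun ν hν => hM.norm_le_one_of_mem_spectrum hν) ?_
    rw [← Complex.norm_eq_one_of_pow_eq_one hμp (by omega)]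
    exact norm_le_specRad hμ

theorem stmt10
    {ℓ : ℕ} (hℓ : 0 < ℓ)
    (F : Matrix (Fin ℓ) (Fin ℓ) ℝ)
    (hF01 : ∀ s t, F s t = 0 ∨ F s t = 1)
    (hFcol : ∀ t s s', F s t ≠ 0 → F s' t ≠ 0 → s = s') :
    specRad F = 1 ↔ ∃ p : ℕ, 1 ≤ p ∧ p ≤ ℓ ∧ ∃ j : Fin ℓ, (F ^ p) j j ≠ 0 :=
  stmt10_general F hF01 hFcol
end
end

section
/- Suppose the automaton ℳ is alive. Then for every integer k₀ there exist an integer k > k₀, a word σ = σ_0σ_1…σ_{k−1} ∈ [m]^k, and an index j ∈ [ℓ] such that the (j,j) entry of F_σ := F_{σ_{k−1}}⋯F_{σ_0} equals 1; that is, accepted words for which F_σ has a nonzero diagonal entry exist with arbitrarily large length. -/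
open Matrix Filter Kronecker

noncomputable section

/-!
Aliveness lets every state `t` choose a letter `g t` whose transition leaves `t`, necessarily
towards a unique state `f t`. Reading along the orbit `t, f t, f² t, …` gives a word whose
product sends `t` to `fᵏ t` with coefficient `1`. Since there are finitely many states, `f` has a
periodic point `t` of some period `q > 0`, and the orbit word of length `n q` returns to `t`,
so its product has `(t, t)` entry `1`.
-/

open Function

theorem Function.periodicPts_nonempty {α : Type*} [Finite α] [Nonempty α] (f : α → α) :
    (periodicPts f).Nonempty := by
  inhabit α
  obtain ⟨a, b, hab, heq⟩ := Finite.exists_ne_map_eq_of_infinite fun n : ℕ => f^[n] default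
  wlog hlt : a < b generalizing a b
  · exact this b a hab.symm heq.symm (hab.lt_or_gt.resolve_left hlt)
  refine ⟨f^[a] default, mk_mem_periodicPts (Nat.sub_pos_of_lt hlt) ?_⟩
  change f^[b - a] (f^[a] default) = f^[a] default
  rw [← iterate_add_apply, Nat.sub_add_cancel hlt.le]
  exact heq.symm

theorem Matrix.apply_eq_ite_of_col_zero_one {ι κ R : Type*} [DecidableEq ι] [Zero R] [One R]
    {M : Matrix ι κ R} {t : κ} {u : ι}
    (h01 : ∀ s, M s t = 0 ∨ M s t = 1)
    (huniq : ∀ s s', M s t ≠ 0 → M s' t ≠ 0 → s = s')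
    (hu : M u t ≠ 0) (s : ι) : M s t = if s = u then 1 else 0 := by
  split_ifs with hsu
  · subst hsu
    exact (h01 s).resolve_left hu
  · by_contra hs
    exact hsu (huniq s u hs hu)

section WordProd

variable {m : ℕ} {N : Type*} [Fintype N] [DecidableEq N]

theorem wordProd_succ (A : Fin m → Matrix N N ℝ) {k : ℕ} (σ : Fin (k + 1) → Fin m) :
    wordProd A σ = wordProd A (Fin.tail σ) * A (σ 0) := by
  simp [wordProd, List.ofFn_succ, Fin.tail]

theorem wordProd_orbit_apply {F : Fin m → Matrix N N ℝ} {g : N → Fin m} {f : N → N}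
    (hstep : ∀ t s, F (g t) s t = if s = f t then 1 else 0) (k : ℕ) (t s : N) :
    wordProd F (fun i : Fin k => g (f^[i] t)) s t = if s = f^[k] t then 1 else 0 := by
  induction k generalizing t with
  | zero =>
    rw [iterate_zero_apply]
    simp [wordProd, Matrix.one_apply]
  | succ k ih =>
    have htail :
        Fin.tail (fun i : Fin (k + 1) => g (f^[i] t)) = fun i : Fin k => g (f^[i] (f t)) :=
      funext fun i => by simp [Fin.tail]
    rw [iterate_succ_apply, wordProd_succ, htail, Matrix.mul_apply]
    simp only [Fin.val_zero, iterate_zero_apply, hstep, mul_ite, mul_one, mul_zero,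
      Finset.sum_ite_eq', Finset.mem_univ, if_true, ih]

end WordProd

theorem stmt11_general
    {m ℓ : ℕ} (hℓ : 0 < ℓ)
    (F : Fin m → Matrix (Fin ℓ) (Fin ℓ) ℝ)
    (hF01 : ∀ i s t, F i s t = 0 ∨ F i s t = 1)
    (hFcol : ∀ i t s s', F i s t ≠ 0 → F i s' t ≠ 0 → s = s')
    (halive : ∀ t : Fin ℓ, ∃ i : Fin m, ∃ s : Fin ℓ, F i s t ≠ 0) :
    ∀ k₀ : ℕ, ∃ k : ℕ, k₀ < k ∧ ∃ σ : Fin k → Fin m, ∃ j : Fin ℓ,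
      (wordProd F σ) j j = 1 := by
  intro k₀
  have : Nonempty (Fin ℓ) := ⟨⟨0, hℓ⟩⟩
  choose g f hf using halive
  have hstep : ∀ t s, F (g t) s t = if s = f t then 1 else 0 := fun t =>
    Matrix.apply_eq_ite_of_col_zero_one (hF01 (g t) · t) (hFcol (g t) t) (hf t)
  obtain ⟨t, q, hq, ht⟩ := periodicPts_nonempty f
  refine ⟨(k₀ + 1) * q, (Nat.lt_succ_self k₀).trans_le (Nat.le_mul_of_pos_right _ hq),
    fun i => g (f^[i] t), t, ?_⟩
  rw [wordProd_orbit_apply hstep, if_pos (ht.const_mul _).eq.symm]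

theorem stmt11
    {m ℓ : ℕ} (hm : 0 < m) (hℓ : 0 < ℓ)
    (F : Fin m → Matrix (Fin ℓ) (Fin ℓ) ℝ)
    (hF01 : ∀ i s t, F i s t = 0 ∨ F i s t = 1)
    (hFcol : ∀ i t s s', F i s t ≠ 0 → F i s' t ≠ 0 → s = s')
    (halive : ∀ t : Fin ℓ, ∃ i : Fin m, ∃ s : Fin ℓ, F i s t ≠ 0) :
    ∀ k₀ : ℕ, ∃ k : ℕ, k₀ < k ∧ ∃ σ : Fin k → Fin m, ∃ j : Fin ℓ,
      (wordProd F σ) j j = 1 :=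
  stmt11_general hℓ F hF01 hFcol halive

end
end
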